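/- arXiv:chao-dyn/9602020 — 6 statements merged into one kernel-verified Lean document; each statement's English description precedes it below -/
import Mathlib

section
/- Let f : ℝ → ℝ be twice differentiable, positive, and bounded on [0,∞), with f(x) decreasing to 0 as x → +∞, with f'(x) < 0 for all sufficiently large x, and suppose limsup_{x→+∞} f'(x)/f(x) < 0. Then f admits no escape-orbit datum: there are no sequences (x_n)_{n≥1} in [0,∞) with x_1 large enough that f' < 0 on [x_1,∞), and (θ_n)_{n≥1} in (0, π/2), satisfying tan θ_{n+1} · (x_{n+1} − x_n) = f(x_n) + f(x_{n+1}) and θ_{n+1} = θ_n + 2·arctan(−f'(x_n)) for all n ≥ 1. -/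
open Real Filter Set

lemma half_le_arctan {u : ℝ} (h0 : 0 ≤ u) (h1 : u ≤ 1) : u / 2 ≤ Real.arctan u := by
  have key : MonotoneOn (fun t => Real.arctan t - t / 2) (Set.Icc (0:ℝ) 1) := by
    apply monotoneOn_of_deriv_nonneg (convex_Icc 0 1)
    · exact (Real.continuous_arctan.sub (continuous_id.div_const 2)).continuousOn
    · intro t _
      exact ((Real.hasDerivAt_arctan t).sub ((hasDerivAt_id t).div_const 2)).differentiableAt.differentiableWithinAt
    · intro t ht
      rw [interior_Icc] at ht
      have h : HasDerivAt (fun t : ℝ => Real.arctan t - t / 2) (1 / (1 + t ^ 2) - 1 / 2) t :=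
        (Real.hasDerivAt_arctan t).sub ((hasDerivAt_id t).div_const 2)
      rw [h.deriv]
      have h1 : (0:ℝ) < 1 + t ^ 2 := by positivity
      rw [sub_nonneg, div_le_div_iff₀ (by norm_num) h1]
      nlinarith [ht.1, ht.2]
  have h := key (Set.mem_Icc.mpr ⟨le_refl 0, zero_le_one⟩) (Set.mem_Icc.mpr ⟨h0, h1⟩) h0
  simp only [Real.arctan_zero] at h
  linarith

/-- Main theorem, case (A1): a flat billiard profile `f` that is twice differentiable,
positive and bounded on `[0,∞)`, decreasing to `0` at `+∞`, with `f' < 0` eventually, and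
with `limsup_{x→∞} f'(x)/f(x) < 0`, admits no escape-orbit datum. -/
theorem no_escape_orbit_A1 (f : ℝ → ℝ)
    (hdiff : ∀ x ∈ Set.Ici (0 : ℝ), DifferentiableAt ℝ f x)
    (hdiff2 : ∀ x ∈ Set.Ici (0 : ℝ), DifferentiableAt ℝ (deriv f) x)
    (hpos : ∀ x ∈ Set.Ici (0 : ℝ), 0 < f x)
    (hbdd : ∃ M : ℝ, ∀ x ∈ Set.Ici (0 : ℝ), f x ≤ M)
    (hmono : AntitoneOn f (Set.Ici (0 : ℝ)))
    (hlim : Tendsto f atTop (nhds 0))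
    (hderiv_neg : ∀ᶠ x in atTop, deriv f x < 0)
    (hA1 : Filter.limsup (fun x => deriv f x / f x) atTop < 0) :
    ¬ ∃ (x θ : ℕ → ℝ),
        (∀ n, 0 ≤ x n) ∧
        (∀ y, x 0 ≤ y → deriv f y < 0) ∧
        (∀ n, θ n ∈ Set.Ioo 0 (π / 2)) ∧
        (∀ n, Real.tan (θ (n + 1)) * (x (n + 1) - x n) = f (x n) + f (x (n + 1))) ∧
        (∀ n, θ (n + 1) = θ n + 2 * Real.arctan (-(deriv f (x n)))) := by
  rintro ⟨x, θ, hx0, hd, hθ, htan, hrec⟩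
  have hθ0 : ∀ n, 0 < θ n := fun n => (hθ n).1
  have hθh : ∀ n, θ n < π / 2 := fun n => (hθ n).2
  have htanpos : ∀ n, 0 < Real.tan (θ n) := fun n =>
    Real.tan_pos_of_pos_of_lt_pi_div_two (hθ0 n) (hθh n)
  have hfpos : ∀ n, 0 < f (x n) := fun n => hpos (x n) (hx0 n)
  have hxlt : ∀ n, x n < x (n + 1) := by
    intro n
    by_contra hle
    push_neg at hle
    have h2 : Real.tan (θ (n + 1)) * (x (n + 1) - x n) ≤ 0 :=
      mul_nonpos_iff.2 (Or.inl ⟨(htanpos (n + 1)).le, by linarith⟩)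
    have := htan n
    linarith [hfpos n, hfpos (n + 1)]
  have hxmono : StrictMono x := strictMono_nat_of_lt_succ hxlt
  have hxge0 : ∀ n, x 0 ≤ x n := fun n => hxmono.monotone (Nat.zero_le n)
  have hdneg : ∀ n, deriv f (x n) < 0 := fun n => hd (x n) (hxge0 n)
  have harcpos : ∀ n, 0 < Real.arctan (-(deriv f (x n))) := by
    intro n
    have h := Real.arctan_strictMono (show (0:ℝ) < -(deriv f (x n)) by linarith [hdneg n])
    simpa using h
  have hθmono : Monotone θ :=
    monotone_nat_of_le_succ (fun n => by rw [hrec n]; linarith [harcpos n])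
  have hθbdd : BddAbove (Set.range θ) :=
    ⟨π / 2, by rintro _ ⟨n, rfl⟩; exact (hθh n).le⟩
  have hΘ : Tendsto θ atTop (nhds (⨆ n, θ n)) := tendsto_atTop_ciSup hθmono hθbdd
  -- deriv f (x n) → 0
  have hdto0 : Tendsto (fun n => deriv f (x n)) atTop (nhds 0) := by
    have h1 : Tendsto (fun n => θ (n + 1) - θ n) atTop (nhds 0) := by
      have := (hΘ.comp (tendsto_add_atTop_nat 1)).sub hΘ
      simpa using this
    have h2 : Tendsto (fun n => Real.arctan (-(deriv f (x n)))) atTop (nhds 0) := by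
      have heq : (fun n => Real.arctan (-(deriv f (x n)))) = fun n => (θ (n + 1) - θ n) / 2 := by
        funext n; rw [hrec n]; ring
      rw [heq]
      simpa using h1.div_const 2
    have hc : ContinuousAt Real.tan 0 := Real.continuousAt_tan.mpr (by simp)
    have h3 := hc.tendsto.comp h2
    have h4 : Tendsto (fun n => -(deriv f (x n))) atTop (nhds 0) := by
      simpa only [Function.comp_def, Real.tan_arctan, Real.tan_zero] using h3
    simpa using h4.neg
  -- x is unbounded
  have hunbdd : ∀ B : ℝ, ∃ n, B ≤ x n := by
    by_contra h
    push_neg at h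
    obtain ⟨B, hB⟩ := h
    have hbdd' : BddAbove (Set.range x) := ⟨B, by rintro _ ⟨n, rfl⟩; exact (hB n).le⟩
    have hxL : Tendsto x atTop (nhds (⨆ n, x n)) := tendsto_atTop_ciSup hxmono.monotone hbdd'
    have hL0 : x 0 ≤ ⨆ n, x n := le_ciSup hbdd' 0
    have hcont : ContinuousAt (deriv f) (⨆ n, x n) :=
      (hdiff2 _ (le_trans (hx0 0) hL0)).continuousAt
    have ht : Tendsto (fun n => deriv f (x n)) atTop (nhds (deriv f (⨆ n, x n))) :=
      hcont.tendsto.comp hxL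
    have hL : deriv f (⨆ n, x n) = 0 := tendsto_nhds_unique ht hdto0
    have : deriv f (⨆ n, x n) < 0 := hd _ hL0
    linarith
  have hxtop : Tendsto x atTop atTop := tendsto_atTop_atTop_of_monotone hxmono.monotone hunbdd
  -- extract c > 0 from the limsup hypothesis
  set S := {a : ℝ | ∀ᶠ y in atTop, deriv f y / f y ≤ a} with hSdef
  have hSeq : Filter.limsup (fun x => deriv f x / f x) atTop = sInf S := Filter.limsup_eq
  have hSne : S.Nonempty := by
    by_contra h
    rw [Set.not_nonempty_iff_eq_empty] at h
    rw [hSeq, h, Real.sInf_empty] at hA1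
    linarith
  obtain ⟨a, haS, ha⟩ := exists_lt_of_csInf_lt hSne (by rw [← hSeq]; exact hA1)
  obtain ⟨c, hc, hca⟩ : ∃ c : ℝ, 0 < c ∧ a = -c := ⟨-a, by linarith, by ring⟩
  subst hca
  have hkey : ∀ᶠ y in atTop, c * f y ≤ -(deriv f y) := by
    filter_upwards [haS, eventually_ge_atTop (0 : ℝ)] with y h1 h2
    have hfy : 0 < f y := hpos y h2
    have := (div_le_iff₀ hfy).mp h1
    nlinarith
  have hev1 : ∀ᶠ n in atTop, c * f (x n) ≤ -(deriv f (x n)) := hxtop.eventually hkey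
  have hfx0 : Tendsto (fun n => f (x n)) atTop (nhds 0) := hlim.comp hxtop
  have hev2 : ∀ᶠ n in atTop, c * f (x n) ≤ 1 := by
    have h : ∀ᶠ n in atTop, f (x n) < 1 / c :=
      hfx0.eventually (eventually_lt_nhds (by positivity))
    filter_upwards [h] with n hn
    have h4 : c * f (x n) < c * (1 / c) := mul_lt_mul_of_pos_left hn hc
    rw [mul_one_div, div_self hc.ne'] at h4
    exact h4.le
  obtain ⟨N, hN⟩ := eventually_atTop.mp (hev1.and hev2)
  obtain ⟨K, hKdef⟩ : ∃ K : ℝ, K = 2 / (c * Real.tan (θ 0)) := ⟨_, rfl⟩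
  have hK : 0 < K := hKdef ▸ div_pos two_pos (mul_pos hc (htanpos 0))
  -- gap estimate
  have hgap : ∀ n, N ≤ n → x (n + 1) ≤ x n + K * (θ (n + 1) - θ n) := by
    intro n hn
    obtain ⟨h1, h2⟩ := hN n hn
    have hfm : f (x (n + 1)) ≤ f (x n) := hmono (hx0 n) (hx0 (n + 1)) (hxlt n).le
    have htle : Real.tan (θ 0) ≤ Real.tan (θ (n + 1)) := by
      rcases eq_or_lt_of_le (hθmono (Nat.zero_le (n + 1))) with h | h
      · rw [h]
      · exact (Real.tan_lt_tan_of_nonneg_of_lt_pi_div_two (hθ0 0).le (hθh (n + 1)) h).le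
    have heq : x (n + 1) - x n = (f (x n) + f (x (n + 1))) / Real.tan (θ (n + 1)) := by
      rw [eq_div_iff (ne_of_gt (htanpos (n + 1)))]
      linarith [htan n, mul_comm (Real.tan (θ (n + 1))) (x (n + 1) - x n)]
    have harc1 : Real.arctan (c * f (x n)) ≤ Real.arctan (-(deriv f (x n))) :=
      Real.arctan_strictMono.monotone h1
    have harc2 : c * f (x n) / 2 ≤ Real.arctan (c * f (x n)) :=
      half_le_arctan (mul_nonneg hc.le (hfpos n).le) h2
    have hθd : θ (n + 1) - θ n = 2 * Real.arctan (-(deriv f (x n))) := by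
      rw [hrec n]; ring
    have hdivle : (f (x n) + f (x (n + 1))) / Real.tan (θ (n + 1)) ≤
        2 * f (x n) / Real.tan (θ 0) :=
      div_le_div₀ (by linarith [hfpos n]) (by linarith) (htanpos 0) htle
    have h3 : c * f (x n) ≤ 2 * Real.arctan (-(deriv f (x n))) := by
      linarith [harc2.trans harc1]
    have hfinal : 2 * f (x n) / Real.tan (θ 0) ≤ K * (θ (n + 1) - θ n) := by
      rw [hθd, hKdef]
      have ht0 := htanpos 0
      rw [div_mul_eq_mul_div, div_le_div_iff₀ ht0 (mul_pos hc ht0)]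
      nlinarith [mul_le_mul_of_nonneg_right h3 ht0.le]
    have hch := hdivle.trans hfinal
    rw [← heq] at hch
    linarith
  -- telescoping bound
  have hind : ∀ m, x (N + m) ≤ x N + K * (θ (N + m) - θ N) := by
    intro m
    induction m with
    | zero => simp
    | succ m ih =>
      have h := hgap (N + m) (Nat.le_add_right N m)
      have heq : N + (m + 1) = (N + m) + 1 := rfl
      rw [heq]
      calc x ((N + m) + 1) ≤ x (N + m) + K * (θ ((N + m) + 1) - θ (N + m)) := h
        _ ≤ x N + K * (θ (N + m) - θ N) + K * (θ ((N + m) + 1) - θ (N + m)) := by linarith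
        _ = x N + K * (θ ((N + m) + 1) - θ N) := by ring
  have hbound : ∀ n, N ≤ n → x n ≤ x N + K * (π / 2) := by
    intro n hn
    obtain ⟨m, rfl⟩ := Nat.exists_eq_add_of_le hn
    have h := hind m
    have hθle : θ (N + m) - θ N ≤ π / 2 := by linarith [hθh (N + m), hθ0 N]
    nlinarith [hK.le]
  obtain ⟨n, hn1, hn2⟩ := ((hxtop.eventually
    (eventually_ge_atTop (x N + K * (π / 2) + 1))).and (eventually_ge_atTop N)).exists
  linarith [hbound n hn2]
end

section
/- Let f : ℝ → ℝ be twice differentiable, positive, and bounded on [0,∞), with f(x) decreasing to 0 as x → +∞, with f'(x) < 0 for all sufficiently large x, and suppose lim_{x→+∞} f'(x) = 0 and limsup_{x→+∞} f''(x)·f(x)/f'(x) < +∞. Then f admits no escape-orbit datum: there are no sequences (x_n)_{n≥1} in [0,∞) with x_1 large enough that f' < 0 on [x_1,∞), and (θ_n)_{n≥1} in (0, π/2), satisfying tan θ_{n+1} · (x_{n+1} − x_n) = f(x_n) + f(x_{n+1}) and θ_{n+1} = θ_n + 2·arctan(−f'(x_n)) for all n ≥ 1. -/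
open Real Filter Set

lemma aux_le_two_arctan {y : ℝ} (h0 : 0 ≤ y) (h1 : y ≤ 1) : y ≤ 2 * Real.arctan y := by
  have hu0 : 0 ≤ Real.arctan y := by
    rw [← Real.arctan_zero]
    exact Real.arctan_strictMono.monotone h0
  have hu1 : Real.arctan y ≤ π / 4 := by
    rw [← Real.arctan_one]
    exact Real.arctan_strictMono.monotone h1
  have hsin : Real.sin (Real.arctan y) ≤ Real.arctan y := Real.sin_le hu0
  have hcos : (1:ℝ)/2 ≤ Real.cos (Real.arctan y) := by
    have h2 : Real.cos (π/4) ≤ Real.cos (Real.arctan y) :=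
      Real.cos_le_cos_of_nonneg_of_le_pi hu0 (by linarith [Real.pi_pos]) hu1
    have h3 : (1:ℝ) ≤ Real.sqrt 2 := by
      nlinarith [Real.sq_sqrt (by norm_num : (2:ℝ) ≥ 0), Real.sqrt_nonneg 2]
    rw [Real.cos_pi_div_four] at h2
    linarith
  have hmul : y * Real.cos (Real.arctan y) = Real.sin (Real.arctan y) := by
    have hc : Real.cos (Real.arctan y) ≠ 0 := (Real.cos_arctan_pos y).ne'
    have := Real.tan_arctan y
    rw [Real.tan_eq_sin_div_cos] at this
    field_simp at this
    linarith [this]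
  nlinarith [hmul, hsin, hcos, h0]

set_option maxHeartbeats 1600000 in
/-- Main theorem, case (A2): a flat billiard profile `f` that is twice differentiable,
positive and bounded on `[0,∞)`, decreasing to `0` at `+∞`, with `f' < 0` eventually,
`f'(x) → 0`, and `limsup_{x→∞} f''(x)·f(x)/f'(x) < +∞` (i.e. the ratio is eventually
bounded above), admits no escape-orbit datum. -/
theorem no_escape_orbit_A2 (f : ℝ → ℝ)
    (hdiff : ∀ x ∈ Set.Ici (0 : ℝ), DifferentiableAt ℝ f x)
    (hdiff2 : ∀ x ∈ Set.Ici (0 : ℝ), DifferentiableAt ℝ (deriv f) x)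
    (hpos : ∀ x ∈ Set.Ici (0 : ℝ), 0 < f x)
    (hbdd : ∃ M : ℝ, ∀ x ∈ Set.Ici (0 : ℝ), f x ≤ M)
    (hmono : AntitoneOn f (Set.Ici (0 : ℝ)))
    (hlim : Tendsto f atTop (nhds 0))
    (hderiv_neg : ∀ᶠ x in atTop, deriv f x < 0)
    (hA2a : Tendsto (deriv f) atTop (nhds 0))
    (hA2b : Filter.IsBoundedUnder (· ≤ ·) atTop
      (fun x => deriv (deriv f) x * f x / deriv f x)) :
    ¬ ∃ (x θ : ℕ → ℝ),
        (∀ n, 0 ≤ x n) ∧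
        (∀ y, x 0 ≤ y → deriv f y < 0) ∧
        (∀ n, θ n ∈ Set.Ioo 0 (π / 2)) ∧
        (∀ n, Real.tan (θ (n + 1)) * (x (n + 1) - x n) = f (x n) + f (x (n + 1))) ∧
        (∀ n, θ (n + 1) = θ n + 2 * Real.arctan (-(deriv f (x n)))) := by
  rintro ⟨x, θ, hx_nonneg, hx0', hθmem, hrel, hstep⟩
  have hfpos : ∀ n, 0 < f (x n) := fun n => hpos _ (hx_nonneg n)
  have htanpos : ∀ n, 0 < Real.tan (θ n) := fun n =>
    Real.tan_pos_of_pos_of_lt_pi_div_two (hθmem n).1 (hθmem n).2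
  -- x is strictly increasing
  have hxlt : ∀ n, x n < x (n + 1) := by
    intro n
    nlinarith [hrel n, hfpos n, hfpos (n + 1), htanpos (n + 1)]
  have hxmono : StrictMono x := strictMono_nat_of_lt_succ hxlt
  have hx_ge0 : ∀ n, x 0 ≤ x n := fun n => hxmono.monotone (Nat.zero_le n)
  have hfderiv_neg : ∀ n, deriv f (x n) < 0 := fun n => hx0' _ (hx_ge0 n)
  -- the sequence of kicks
  set δ : ℕ → ℝ := fun n => 2 * Real.arctan (-(deriv f (x n))) with hδdef
  have hδpos : ∀ n, 0 < δ n := by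
    intro n
    have : (0:ℝ) < Real.arctan (-(deriv f (x n))) := by
      rw [← Real.arctan_zero]
      exact Real.arctan_strictMono (by linarith [hfderiv_neg n])
    simp only [hδdef]
    linarith
  have hθsucc : ∀ n, θ (n + 1) - θ n = δ n := fun n => by rw [hstep n]; ring
  have hθmono : Monotone θ := monotone_nat_of_le_succ fun n => by
    have := hθsucc n; have := hδpos n; linarith
  -- θ converges, so δ → 0, so deriv f (x n) → 0
  have hθlim : ∃ l, Tendsto θ atTop (nhds l) := by
    rcases tendsto_of_monotone hθmono with h | h
    · exfalso
      obtain ⟨n, hn⟩ := (h.eventually_gt_atTop (π / 2)).exists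
      exact absurd (hθmem n).2 (by linarith)
    · exact h
  obtain ⟨l, hl⟩ := hθlim
  have hδ0 : Tendsto δ atTop (nhds 0) := by
    have h1 : Tendsto (fun n => θ (n + 1)) atTop (nhds l) :=
      hl.comp (tendsto_add_atTop_nat 1)
    have h2 : Tendsto (fun n => θ (n + 1) - θ n) atTop (nhds (l - l)) := h1.sub hl
    rw [sub_self] at h2
    exact h2.congr fun n => hθsucc n
  have harctan0 : Tendsto (fun n => Real.arctan (-(deriv f (x n)))) atTop (nhds 0) := by
    have := hδ0.const_mul (1/2 : ℝ)
    simp only [hδdef] at this ⊢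
    convert this using 2 with n
    · ring
    · ring
  have hg0 : Tendsto (fun n => -(deriv f (x n))) atTop (nhds 0) := by
    have hcont : ContinuousAt Real.tan 0 := by
      rw [Real.continuousAt_tan]
      simp
    have h1 : Tendsto (fun n => Real.tan (Real.arctan (-(deriv f (x n))))) atTop
        (nhds (Real.tan 0)) := hcont.tendsto.comp harctan0
    simpa [Real.tan_arctan] using h1
  have hderivfx0 : Tendsto (fun n => deriv f (x n)) atTop (nhds 0) := by
    simpa using hg0.neg
  -- x → ∞
  have hx_top : Tendsto x atTop atTop := by
    rcases tendsto_of_monotone hxmono.monotone with h | ⟨L, hL⟩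
    · exact h
    · exfalso
      have hL0 : x 0 ≤ L := ge_of_tendsto hL (Eventually.of_forall hx_ge0)
      have hLmem : L ∈ Set.Ici (0:ℝ) := le_trans (hx_nonneg 0) hL0
      have hcont : ContinuousAt (deriv f) L := (hdiff2 L hLmem).continuousAt
      have h2 : Tendsto (fun n => deriv f (x n)) atTop (nhds (deriv f L)) :=
        hcont.tendsto.comp hL
      have := tendsto_nhds_unique h2 hderivfx0
      have := hx0' L hL0
      linarith
  -- constants
  set t := Real.tan (θ 0) with ht_def
  have ht : 0 < t := htanpos 0
  have htan_ge : ∀ n, t ≤ Real.tan (θ n) := by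
    intro n
    have h0 : θ 0 ∈ Set.Ioo (-(π/2)) (π/2) :=
      ⟨by linarith [(hθmem 0).1, Real.pi_pos], (hθmem 0).2⟩
    have hn : θ n ∈ Set.Ioo (-(π/2)) (π/2) :=
      ⟨by linarith [(hθmem n).1, Real.pi_pos], (hθmem n).2⟩
    exact Real.strictMonoOn_tan.monotoneOn h0 hn (hθmono (Nat.zero_le n))
  obtain ⟨C₀, hC₀⟩ := hA2b
  rw [Filter.eventually_map] at hC₀
  set C := max C₀ 0 with hC_def
  have hC0 : 0 ≤ C := le_max_right _ _
  have hC_ev : ∀ᶠ s in atTop, deriv (deriv f) s * f s / deriv f s ≤ C :=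
    hC₀.mono fun s hs => le_trans hs (le_max_left _ _)
  have habs : ∀ᶠ s in atTop, |deriv f s| < min (t/4) 1 := by
    have hε : 0 < min (t/4) 1 := lt_min (by linarith) one_pos
    have := (Metric.tendsto_nhds.mp hA2a) _ hε
    simpa [Real.dist_eq] using this
  have hev : ∀ᶠ s in atTop, (deriv (deriv f) s * f s / deriv f s ≤ C ∧
      |deriv f s| < min (t/4) 1 ∧ x 0 ≤ s ∧ (0:ℝ) ≤ s) := by
    filter_upwards [hC_ev, habs, eventually_ge_atTop (x 0), eventually_ge_atTop (0:ℝ)]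
      with s h1 h2 h3 h4
    exact ⟨h1, h2, h3, h4⟩
  obtain ⟨X, hX⟩ := eventually_atTop.mp hev
  obtain ⟨N, hN⟩ := eventually_atTop.mp (hx_top.eventually_ge_atTop X)
  set e := Real.exp (4 * C / t) with he_def
  set K := 4 * e / t with hK_def
  have he0 : 0 < e := Real.exp_pos _
  have hKnn : 0 ≤ K := by positivity
  -- key per-step estimate
  have key : ∀ n, N ≤ n → Real.log (f (x n)) - Real.log (f (x (n+1))) ≤ K * δ n := by
    intro n hn
    set a := x n with ha_def
    set b := x (n+1) with hb_def
    have hXa : X ≤ a := hN n hn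
    have hab : a < b := hxlt n
    have hXs : ∀ s, a ≤ s → (deriv (deriv f) s * f s / deriv f s ≤ C ∧
        |deriv f s| < min (t/4) 1 ∧ x 0 ≤ s ∧ (0:ℝ) ≤ s) :=
      fun s hs => hX s (le_trans hXa hs)
    have ha0 : (0:ℝ) ≤ a := (hXs a le_rfl).2.2.2
    have hfa : 0 < f a := hfpos n
    have hfb : 0 < f b := hfpos (n+1)
    have hfba : f b ≤ f a := hmono ha0 (le_trans ha0 hab.le) hab.le
    have hgap : b - a ≤ 2 * f a / t := by
      have h1 := hrel n
      have h2 := htan_ge (n+1)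
      rw [le_div_iff₀ ht]
      nlinarith [hab]
    have hcontf : ContinuousOn f (Set.Icc a b) := fun s hs =>
      ((hdiff s (le_trans ha0 hs.1)).continuousAt).continuousWithinAt
    have hdofff : DifferentiableOn ℝ f (Set.Ioo a b) := fun s hs =>
      (hdiff s (le_trans ha0 hs.1.le)).differentiableWithinAt
    obtain ⟨η, hηmem, hηd⟩ := exists_deriv_eq_slope f hab hcontf hdofff
    have hηa : a ≤ η := hηmem.1.le
    have hgη_small : -(deriv f η) < t/4 :=
      calc -(deriv f η) ≤ |deriv f η| := neg_le_abs _
        _ < min (t/4) 1 := (hXs η hηa).2.1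
        _ ≤ t/4 := min_le_left _ _
    have hdrop : f a - f b = (-(deriv f η)) * (b - a) := by
      have hne : b - a ≠ 0 := by linarith
      rw [eq_div_iff hne] at hηd
      linear_combination hηd
    have hgη_nonneg : 0 ≤ -(deriv f η) := by
      linarith [hx0' η (le_trans (hXs a le_rfl).2.2.1 hηa)]
    have hhalf : f a ≤ 2 * f b := by
      have h1 : (-(deriv f η)) * (b - a) ≤ (t/4) * (2 * f a / t) :=
        mul_le_mul hgη_small.le hgap (by linarith) (by linarith)
      have h2 : (t/4) * (2 * f a / t) = f a / 2 := by field_simp; ring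
      linarith [hdrop]
    -- Gronwall on [a,b]
    set m := f b with hm_def
    have hm_pos : 0 < m := hfb
    have hfm : ∀ s ∈ Set.Icc a b, m ≤ f s := fun s hs =>
      hmono (le_trans ha0 hs.1) (le_trans ha0 hab.le) hs.2
    set φ : ℝ → ℝ := fun s => -(deriv f s) * Real.exp (-(C/m) * s) with hφ_def
    have hder : ∀ s, (0:ℝ) ≤ s → HasDerivAt φ
        (-(deriv (deriv f) s) * Real.exp (-(C/m) * s) +
          -(deriv f s) * (Real.exp (-(C/m) * s) * (-(C/m)))) s := by
      intro s hs0
      have h1 : HasDerivAt (fun u => -(deriv f u)) (-(deriv (deriv f) s)) s :=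
        ((hdiff2 s hs0).hasDerivAt).neg
      have h2 : HasDerivAt (fun u : ℝ => -(C/m) * u) (-(C/m)) s := by
        simpa using (hasDerivAt_id s).const_mul (-(C/m))
      exact h1.mul h2.exp
    have hφanti : AntitoneOn φ (Set.Icc a b) := by
      apply antitoneOn_of_deriv_nonpos (convex_Icc a b)
      · apply ContinuousOn.mul
        · exact fun s hs =>
            (((hdiff2 s (le_trans ha0 hs.1)).continuousAt).neg).continuousWithinAt
        · exact (Real.continuous_exp.comp (continuous_const.mul continuous_id)).continuousOn
      · rw [interior_Icc]
        exact fun s hs =>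
          (hder s (le_trans ha0 hs.1.le)).differentiableAt.differentiableWithinAt
      · rw [interior_Icc]
        intro s hs
        rw [(hder s (le_trans ha0 hs.1.le)).deriv]
        have hXs' := hXs s hs.1.le
        have hf's : deriv f s < 0 := hx0' s hXs'.2.2.1
        have hfs : 0 < f s := hpos s hXs'.2.2.2
        have hms : m ≤ f s := hfm s ⟨hs.1.le, hs.2.le⟩
        have hC3 : C * deriv f s ≤ deriv (deriv f) s * f s :=
          (div_le_iff_of_neg hf's).mp hXs'.1
        have hkey : -(deriv (deriv f) s) ≤ C * (-(deriv f s)) / m := by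
          have e1 : -(deriv (deriv f) s) ≤ C * (-(deriv f s)) / f s := by
            rw [le_div_iff₀ hfs]; linarith [hC3]
          have e2 : C * (-(deriv f s)) / f s ≤ C * (-(deriv f s)) / m :=
            div_le_div_of_nonneg_left (by nlinarith [hf's, hC0]) hm_pos hms
          linarith
        have hE := Real.exp_pos (-(C/m) * s)
        have hq : -(deriv (deriv f) s) - C/m * (-(deriv f s)) ≤ 0 := by
          have hr : C * (-(deriv f s)) / m = C/m * (-(deriv f s)) := by ring
          rw [hr] at hkey
          linarith
        have hprod := mul_nonpos_of_nonneg_of_nonpos hE.le hq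
        nlinarith [hprod]
    have hφab : φ η ≤ φ a := hφanti (Set.left_mem_Icc.mpr hab.le) ⟨hηa, hηmem.2.le⟩ hηa
    have hga_nonneg : 0 ≤ -(deriv f a) := by linarith [hfderiv_neg n]
    have hexp_arg : -(C/m) * a + (C/m) * η ≤ 4 * C / t := by
      have h1 : η - a ≤ 2 * f a / t := by linarith [hηmem.2, hgap]
      have h2 : (0:ℝ) ≤ C/m := by positivity
      have h3 : (C/m) * (η - a) ≤ (C/m) * (2 * f a / t) := mul_le_mul_of_nonneg_left h1 h2
      have h4 : (C/m) * (2 * f a / t) ≤ (C/m) * (2 * (2*m) / t) := by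
        gcongr
      have h5 : (C/m) * (2 * (2*m) / t) = 4 * C / t := by field_simp; ring
      nlinarith [h3, h4, h5]
    have hgrowth : -(deriv f η) ≤ -(deriv f a) * e := by
      have h1 : -(deriv f η) =
          (-(deriv f η) * Real.exp (-(C/m) * η)) * Real.exp ((C/m) * η) := by
        rw [mul_assoc, ← Real.exp_add]; simp
      rw [h1]
      calc (-(deriv f η) * Real.exp (-(C/m) * η)) * Real.exp ((C/m) * η)
          ≤ (-(deriv f a) * Real.exp (-(C/m) * a)) * Real.exp ((C/m) * η) :=
            mul_le_mul_of_nonneg_right hφab (Real.exp_pos _).le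
        _ = -(deriv f a) * Real.exp (-(C/m) * a + (C/m) * η) := by
            rw [mul_assoc, ← Real.exp_add]
        _ ≤ -(deriv f a) * e := by
            apply mul_le_mul_of_nonneg_left _ hga_nonneg
            rw [he_def]
            exact Real.exp_le_exp.mpr hexp_arg
    have hdrop2 : f a - f b ≤ (-(deriv f a)) * e * (2 * f a / t) := by
      have h1 : f a - f b ≤ (-(deriv f a) * e) * (b - a) := by
        rw [hdrop]; exact mul_le_mul_of_nonneg_right hgrowth (by linarith)
      have h2 : (-(deriv f a) * e) * (b - a) ≤ (-(deriv f a) * e) * (2 * f a / t) :=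
        mul_le_mul_of_nonneg_left hgap (mul_nonneg hga_nonneg he0.le)
      linarith
    -- conclude the log estimate
    have hga1 : -(deriv f a) ≤ 1 := by
      have := (hXs a le_rfl).2.1
      calc -(deriv f a) ≤ |deriv f a| := neg_le_abs _
        _ ≤ min (t/4) 1 := this.le
        _ ≤ 1 := min_le_right _ _
    have hgδ : -(deriv f a) ≤ δ n := by
      have h := aux_le_two_arctan hga_nonneg hga1
      simp only [hδdef]
      rw [← ha_def]
      exact h
    have h1 : Real.log (f a) - Real.log (f b) = Real.log (f a / f b) :=
      (Real.log_div hfa.ne' hfb.ne').symm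
    have h2 : Real.log (f a / f b) ≤ f a / f b - 1 :=
      Real.log_le_sub_one_of_pos (by positivity)
    have h3 : f a / f b - 1 = (f a - f b) / f b := by rw [sub_div, div_self hfb.ne']
    have h4 : (f a - f b) / f b ≤ (f a - f b) * 2 / f a := by
      rw [div_le_div_iff₀ hfb hfa]
      nlinarith [hfba, hhalf]
    have h5 : (f a - f b) * 2 / f a ≤ K * (-(deriv f a)) := by
      rw [div_le_iff₀ hfa, hK_def]
      have ht' : t ≠ 0 := ne_of_gt ht
      have hexp : 2 * ((-(deriv f a)) * e * (2 * f a / t)) =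
          4 * e / t * (-(deriv f a)) * f a := by ring
      linarith [hdrop2, hexp]
    have h6 : K * (-(deriv f a)) ≤ K * δ n := mul_le_mul_of_nonneg_left hgδ hKnn
    calc Real.log (f a) - Real.log (f b) = Real.log (f a / f b) := h1
      _ ≤ f a / f b - 1 := h2
      _ = (f a - f b) / f b := h3
      _ ≤ (f a - f b) * 2 / f a := h4
      _ ≤ K * (-(deriv f a)) := h5
      _ ≤ K * δ n := h6
  -- sum the estimates: log f (x (N+M)) is bounded below
  have hsum : ∀ M, Real.log (f (x N)) - K * (π/2) ≤ Real.log (f (x (N + M))) := by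
    intro M
    have h1 : ∑ k ∈ Finset.range M,
        (Real.log (f (x (N+k))) - Real.log (f (x (N+k+1)))) =
        Real.log (f (x N)) - Real.log (f (x (N+M))) := by
      have h := Finset.sum_range_sub' (fun k => Real.log (f (x (N+k)))) M
      simpa [add_assoc] using h
    have h2 : ∑ k ∈ Finset.range M,
        (Real.log (f (x (N+k))) - Real.log (f (x (N+k+1)))) ≤
        ∑ k ∈ Finset.range M, K * δ (N+k) :=
      Finset.sum_le_sum fun k _ => key (N+k) (Nat.le_add_right N k)
    have h3 : ∑ k ∈ Finset.range M, δ (N+k) ≤ π/2 := by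
      have h4 : ∑ k ∈ Finset.range M, (θ (N+k+1) - θ (N+k)) = θ (N+M) - θ N := by
        have h := Finset.sum_range_sub (fun k => θ (N+k)) M
        simpa [add_assoc] using h
      have h5 : ∑ k ∈ Finset.range M, δ (N+k) = θ (N+M) - θ N := by
        rw [← h4]
        exact Finset.sum_congr rfl fun k _ => (hθsucc (N+k)).symm
      rw [h5]
      linarith [(hθmem (N+M)).2, (hθmem N).1]
    have h6 : ∑ k ∈ Finset.range M, K * δ (N+k) = K * ∑ k ∈ Finset.range M, δ (N+k) :=
      (Finset.mul_sum _ _ _).symm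
    have h7 : K * ∑ k ∈ Finset.range M, δ (N+k) ≤ K * (π/2) :=
      mul_le_mul_of_nonneg_left h3 hKnn
    linarith [h1 ▸ (h2.trans (h6 ▸ h7))]
  -- but log f (x n) → -∞: contradiction
  have hfx0 : Tendsto (fun n => f (x n)) atTop (nhds 0) := hlim.comp hx_top
  have hfx0' : Tendsto (fun n => f (x n)) atTop (nhdsWithin 0 (Set.Ioi 0)) :=
    tendsto_nhdsWithin_of_tendsto_nhds_of_eventually_within _ hfx0
      (Eventually.of_forall fun n => hfpos n)
  have hlogbot : Tendsto (fun n => Real.log (f (x n))) atTop atBot :=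
    Real.tendsto_log_nhdsGT_zero.comp hfx0'
  obtain ⟨n₁, hn₁⟩ := eventually_atTop.mp
    (hlogbot.eventually_le_atBot (Real.log (f (x N)) - K * (π/2) - 1))
  have h8 := hn₁ (N + n₁) (Nat.le_add_left n₁ N)
  have h9 := hsum n₁
  linarith
end

section
/- Let f : ℝ → ℝ be differentiable and positive, let k_2 > 0, let ε > 0 satisfy 2ε/k_2 < 1, and suppose f'(x) ≥ −ε for all x in an interval [a, b] with b − a ≤ (2/k_2)·f(a). Then f(a)/f(b) ≤ 1/(1 − 2ε/k_2); in particular there is a constant k_6 (depending only on ε and k_2) with f(a) ≤ k_6 · f(b). -/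
open Real Filter Set

/-! The mean value theorem gives `f b ≥ f a - ε (b - a)`, and the step bound turns the loss
`ε (b - a)` into at most the fraction `2ε/k₂` of `f a`, so `f b ≥ (1 - 2ε/k₂) f a`. -/

theorem mul_one_sub_le_of_neg_le_deriv {f : ℝ → ℝ} {a b ε L : ℝ}
    (hcont : ContinuousOn f (Icc a b)) (hdiff : DifferentiableOn ℝ f (Ioo a b))
    (hε : 0 ≤ ε) (hab : a ≤ b) (hstep : b - a ≤ L * f a)
    (hderiv : ∀ x ∈ Ioo a b, -ε ≤ deriv f x) :
    f a * (1 - ε * L) ≤ f b := by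
  have hmvt : -ε * (b - a) ≤ f b - f a :=
    (convex_Icc a b).mul_sub_le_image_sub_of_le_deriv hcont
      (by rwa [interior_Icc]) (by rwa [interior_Icc])
      a (left_mem_Icc.2 hab) b (right_mem_Icc.2 hab) hab
  calc f a * (1 - ε * L) = f a - ε * (L * f a) := by ring
    _ ≤ f a - ε * (b - a) := by gcongr
    _ ≤ f b := by linarith

theorem ratio_bound_general (f : ℝ → ℝ) (a b k₂ ε : ℝ)
    (hdiff : Differentiable ℝ f)
    (hpos : ∀ x, 0 < f x)
    (hε : 0 < ε)
    (hsmall : 2 * ε / k₂ < 1)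
    (hab : a ≤ b)
    (hstep : b - a ≤ (2 / k₂) * f a)
    (hderiv : ∀ x ∈ Set.Icc a b, -ε ≤ deriv f x) :
    f a / f b ≤ 1 / (1 - 2 * ε / k₂) ∧
    f a ≤ (1 / (1 - 2 * ε / k₂)) * f b := by
  have key : f a * (1 - 2 * ε / k₂) ≤ f b := by
    have h := mul_one_sub_le_of_neg_le_deriv hdiff.continuous.continuousOn
      hdiff.differentiableOn hε.le hab hstep (fun x hx => hderiv x (Ioo_subset_Icc_self hx))
    rwa [mul_div_assoc', mul_comm ε 2] at h
  have hden : 0 < 1 - 2 * ε / k₂ := by linarith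
  constructor
  · rwa [div_le_div_iff₀ (hpos b) hden, one_mul]
  · rwa [one_div_mul_eq_div, le_div_iff₀ hden]

/-- Lemma 1 of the paper: if `f` is differentiable and positive, `f' ≥ −ε` on `[a,b]`,
`b − a ≤ (2/k₂)·f(a)` and `2ε/k₂ < 1`, then `f(a)/f(b) ≤ 1/(1 − 2ε/k₂)`; in particular
with `k₆ := 1/(1 − 2ε/k₂)` one has `f(a) ≤ k₆·f(b)`. -/
theorem ratio_bound (f : ℝ → ℝ) (a b k₂ ε : ℝ)
    (hdiff : Differentiable ℝ f)
    (hpos : ∀ x, 0 < f x)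
    (hk₂ : 0 < k₂)
    (hε : 0 < ε)
    (hsmall : 2 * ε / k₂ < 1)
    (hab : a ≤ b)
    (hstep : b - a ≤ (2 / k₂) * f a)
    (hderiv : ∀ x ∈ Set.Icc a b, -ε ≤ deriv f x) :
    f a / f b ≤ 1 / (1 - 2 * ε / k₂) ∧
    f a ≤ (1 / (1 - 2 * ε / k₂)) * f b :=
  ratio_bound_general f a b k₂ ε hdiff hpos hε hsmall hab hstep hderiv
end

section
/- Fix α > 1, β > 0, c > 1 and define f_1(x) := ∫_x^{∞} z^{−α}(sin(z^β) + c) dz for x > 0. Then this integral converges, f_1 is positive with f_1'(x) = −x^{−α}(sin(x^β) + c) < 0 and f_1(x) → 0 and f_1'(x) → 0 as x → +∞; moreover, if α ≥ β then limsup_{x→+∞} f_1''(x)·f_1(x)/f_1'(x) < +∞, so f_1 satisfies hypothesis (A2) of the main theorem even though f_1 is not eventually convex. -/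
open Real Filter Set MeasureTheory
open scoped Topology

/-- The paper's first example: for `α > 1`, `β > 0`, `c > 1`, the profile
`f₁(x) := ∫_x^∞ z^{−α}(sin(z^β) + c) dz` is well defined, positive, has derivative
`f₁'(x) = −x^{−α}(sin(x^β) + c) < 0`, tends to `0` together with `f₁'` at `+∞`; if moreover
`α ≥ β` then `limsup_{x→∞} f₁''·f₁/f₁' < +∞` (the ratio is eventually bounded above), so
`f₁` satisfies hypothesis (A2), even though `f₁` is not eventually convex. -/
theorem example_A2_nonconvex (α β c : ℝ) (hα : 1 < α) (hβ : 0 < β) (hc : 1 < c)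
    (f₁ : ℝ → ℝ)
    (hf₁ : ∀ x, 0 < x → f₁ x = ∫ z in Set.Ioi x, z ^ (-α) * (Real.sin (z ^ β) + c)) :
    (∀ x, 0 < x →
      IntegrableOn (fun z => z ^ (-α) * (Real.sin (z ^ β) + c)) (Set.Ioi x)) ∧
    (∀ x, 0 < x → 0 < f₁ x) ∧
    (∀ x, 0 < x → HasDerivAt f₁ (-(x ^ (-α) * (Real.sin (x ^ β) + c))) x) ∧
    (∀ x, 0 < x → -(x ^ (-α) * (Real.sin (x ^ β) + c)) < 0) ∧
    Tendsto f₁ atTop (nhds 0) ∧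
    Tendsto (deriv f₁) atTop (nhds 0) ∧
    (β ≤ α → Filter.IsBoundedUnder (· ≤ ·) atTop
      (fun x => deriv (deriv f₁) x * f₁ x / deriv f₁ x)) ∧
    ¬ (∀ᶠ x in atTop, 0 ≤ deriv (deriv f₁) x) := by
  set g : ℝ → ℝ := fun z => z ^ (-α) * (Real.sin (z ^ β) + c) with hg
  -- basic positivity of the integrand
  have hsc : ∀ t : ℝ, 0 < Real.sin t + c := fun t => by
    have := Real.neg_one_le_sin t; linarith
  have hsc' : ∀ t : ℝ, Real.sin t + c ≤ 1 + c := fun t => by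
    have := Real.sin_le_one t; linarith
  have hgpos : ∀ z : ℝ, 0 < z → 0 < g z := fun z hz =>
    mul_pos (Real.rpow_pos_of_pos hz _) (hsc _)
  -- derivative of g on (0,∞)
  have hgderiv : ∀ x : ℝ, 0 < x → HasDerivAt g
      ((-α) * x ^ (-α - 1) * (Real.sin (x ^ β) + c)
        + x ^ (-α) * (Real.cos (x ^ β) * (β * x ^ (β - 1)))) x := by
    intro x hx
    have h1 : HasDerivAt (fun z : ℝ => z ^ (-α)) ((-α) * x ^ (-α - 1)) x :=
      Real.hasDerivAt_rpow_const (Or.inl hx.ne')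
    have h2 : HasDerivAt (fun z : ℝ => Real.sin (z ^ β) + c)
        (Real.cos (x ^ β) * (β * x ^ (β - 1))) x := by
      have hb : HasDerivAt (fun z : ℝ => z ^ β) (β * x ^ (β - 1)) x :=
        Real.hasDerivAt_rpow_const (Or.inl hx.ne')
      exact ((Real.hasDerivAt_sin (x ^ β)).comp x hb).add_const c
    exact h1.mul h2
  have hgcontOn : ContinuousOn g (Ioi 0) := fun z hz =>
    ((hgderiv z hz).continuousAt).continuousWithinAt
  -- integrability
  have hint : ∀ x : ℝ, 0 < x → IntegrableOn g (Ioi x) := by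
    intro x hx
    have hb : IntegrableOn (fun z : ℝ => z ^ (-α) * (1 + c)) (Ioi x) :=
      (integrableOn_Ioi_rpow_of_lt (by linarith) hx).mul_const _
    refine hb.integrable.mono' ?_ ?_
    · exact (hgcontOn.mono fun z hz => lt_trans hx hz).aestronglyMeasurable measurableSet_Ioi
    · filter_upwards [ae_restrict_mem measurableSet_Ioi] with z hz
      have hz0 : 0 < z := lt_trans hx hz
      have h1 : 0 ≤ z ^ (-α) := (Real.rpow_pos_of_pos hz0 _).le
      rw [Real.norm_eq_abs, abs_of_pos (hgpos z hz0)]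
      exact mul_le_mul_of_nonneg_left (hsc' _) h1
  -- splitting of the integral
  have hsplit : ∀ a b : ℝ, 0 < a → a ≤ b → f₁ a = (∫ t in a..b, g t) + f₁ b := by
    intro a b ha hab
    have hb : 0 < b := lt_of_lt_of_le ha hab
    rw [hf₁ a ha, hf₁ b hb, intervalIntegral.integral_of_le hab]
    rw [← Ioc_union_Ioi_eq_Ioi hab]
    exact setIntegral_union Ioc_disjoint_Ioi_same measurableSet_Ioi
      ((hint a ha).mono_set Ioc_subset_Ioi_self) (hint b hb)
  -- derivative of f₁
  have hasderiv : ∀ x : ℝ, 0 < x → HasDerivAt f₁ (-(g x)) x := by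
    intro x hx
    have ha : 0 < x / 2 := by linarith
    have hF : HasDerivAt (fun y => f₁ (x / 2) - ∫ t in (x/2)..y, g t) (-(g x)) x := by
      have hInt : IntervalIntegrable g volume (x/2) x := by
        rw [intervalIntegrable_iff_integrableOn_Ioc_of_le (by linarith)]
        exact (hint (x/4) (by linarith)).mono_set fun z hz =>
          lt_of_lt_of_le (by linarith) hz.1.le
      have hmeas : StronglyMeasurableAtFilter g (𝓝 x) volume :=
        hgcontOn.stronglyMeasurableAtFilter isOpen_Ioi x hx
      exact (intervalIntegral.integral_hasDerivAt_right hInt hmeas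
        ((hgderiv x hx).continuousAt)).const_sub _
    apply hF.congr_of_eventuallyEq
    filter_upwards [isOpen_Ioi.mem_nhds (show x ∈ Ioi (x/2) by simp; linarith)] with y hy
    have := hsplit (x/2) y ha (le_of_lt hy)
    linarith
  -- positivity of f₁
  have hf₁nonneg : ∀ x : ℝ, 0 < x → 0 ≤ f₁ x := by
    intro x hx
    rw [hf₁ x hx]
    exact setIntegral_nonneg measurableSet_Ioi fun z hz => (hgpos z (lt_trans hx hz)).le
  have hf₁pos : ∀ x : ℝ, 0 < x → 0 < f₁ x := by
    intro x hx
    have h1 : f₁ x = (∫ t in x..(x+1), g t) + f₁ (x+1) := hsplit x (x+1) hx (by linarith)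
    have h2 : 0 < ∫ t in x..(x+1), g t := by
      refine intervalIntegral.intervalIntegral_pos_of_pos_on ?_ ?_ (by linarith)
      · rw [intervalIntegrable_iff_integrableOn_Ioc_of_le (by linarith)]
        exact (hint (x/2) (by linarith)).mono_set fun z hz =>
          lt_of_lt_of_le (by linarith) hz.1.le
      · exact fun t ht => hgpos t (lt_trans hx ht.1)
    have h3 := hf₁nonneg (x+1) (by linarith)
    linarith
  -- upper bound for f₁
  have hf₁bd : ∀ x : ℝ, 0 < x → f₁ x ≤ x ^ (-α + 1) / (α - 1) * (1 + c) := by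
    intro x hx
    have h1 : f₁ x ≤ ∫ z in Ioi x, z ^ (-α) * (1 + c) := by
      rw [hf₁ x hx]
      refine setIntegral_mono_on (hint x hx)
        ((integrableOn_Ioi_rpow_of_lt (by linarith) hx).mul_const _) measurableSet_Ioi ?_
      intro z hz
      exact mul_le_mul_of_nonneg_left (hsc' _) (Real.rpow_pos_of_pos (lt_trans hx hz) _).le
    have h2 : ∫ z in Ioi x, z ^ (-α) * (1 + c) = (-x ^ (-α + 1) / (-α + 1)) * (1 + c) := by
      rw [integral_mul_const, integral_Ioi_rpow_of_lt (by linarith) hx]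
    have h3 : (-x ^ (-α + 1) / (-α + 1)) = x ^ (-α + 1) / (α - 1) := by
      rw [show -α + 1 = -(α - 1) by ring, neg_div_neg_eq]
    rw [h2, h3] at h1
    exact h1
  have hderiv2 : ∀ x : ℝ, 0 < x → deriv (deriv f₁) x
      = -((-α) * x ^ (-α - 1) * (Real.sin (x ^ β) + c)
        + x ^ (-α) * (Real.cos (x ^ β) * (β * x ^ (β - 1)))) := by
    intro x hx
    have hEq : deriv f₁ =ᶠ[𝓝 x] fun y => -(g y) := by
      filter_upwards [isOpen_Ioi.mem_nhds (Set.mem_Ioi.mpr hx)] with y hy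
      exact (hasderiv y hy).deriv
    rw [hEq.deriv_eq]
    exact ((hgderiv x hx).neg).deriv
  -- f₁ tends to 0
  have htend1 : Tendsto f₁ atTop (nhds 0) := by
    have hlim : Tendsto (fun x : ℝ => x ^ (-α + 1) / (α - 1) * (1 + c)) atTop (nhds 0) := by
      have h0 : Tendsto (fun x : ℝ => x ^ (-α + 1)) atTop (nhds 0) := by
        have := tendsto_rpow_neg_atTop (show (0:ℝ) < α - 1 by linarith)
        simpa [show -(α - 1) = -α + 1 by ring] using this
      simpa using (h0.div_const (α - 1)).mul_const (1 + c)
    refine tendsto_of_tendsto_of_tendsto_of_le_of_le' tendsto_const_nhds hlim ?_ ?_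
    · filter_upwards [eventually_gt_atTop 0] with x hx using hf₁nonneg x hx
    · filter_upwards [eventually_gt_atTop 0] with x hx using hf₁bd x hx
  -- deriv f₁ tends to 0
  have htend2 : Tendsto (deriv f₁) atTop (nhds 0) := by
    have h0 : Tendsto (fun x : ℝ => -(x ^ (-α) * (1 + c))) atTop (nhds 0) := by
      have := tendsto_rpow_neg_atTop (show (0:ℝ) < α by linarith)
      simpa using ((this.mul_const (1 + c)).neg)
    refine tendsto_of_tendsto_of_tendsto_of_le_of_le' h0 tendsto_const_nhds ?_ ?_
    · filter_upwards [eventually_gt_atTop 0] with x hx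
      rw [(hasderiv x hx).deriv]
      have h1 : g x ≤ x ^ (-α) * (1 + c) :=
        mul_le_mul_of_nonneg_left (hsc' _) (Real.rpow_pos_of_pos hx _).le
      linarith
    · filter_upwards [eventually_gt_atTop 0] with x hx
      rw [(hasderiv x hx).deriv]
      have := hgpos x hx
      linarith
  -- the limsup bound
  have part7 : β ≤ α → Filter.IsBoundedUnder (· ≤ ·) atTop
      (fun x => deriv (deriv f₁) x * f₁ x / deriv f₁ x) := by
    intro hβα
    have hc1 : (0:ℝ) < 1 + c := by linarith
    have hα1 : (0:ℝ) < α - 1 := by linarith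
    have hcm : (0:ℝ) < c - 1 := by linarith
    have hab : (0:ℝ) < α * (1 + c) + β := by nlinarith
    refine ⟨(α * (1 + c) + β) * ((1 + c) / (α - 1)) / (c - 1), ?_⟩
    rw [Filter.eventually_map]
    filter_upwards [eventually_ge_atTop 1] with x hx1
    have hx : (0:ℝ) < x := lt_of_lt_of_le one_pos hx1
    have hD : deriv f₁ x = -(g x) := (hasderiv x hx).deriv
    have hgx : 0 < g x := hgpos x hx
    have hstep1 : deriv (deriv f₁) x * f₁ x / deriv f₁ x
        ≤ |deriv (deriv f₁) x| * f₁ x / g x := by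
      rw [hD, div_neg, ← neg_div]
      apply div_le_div_of_nonneg_right ?_ hgx.le
      calc -(deriv (deriv f₁) x * f₁ x) ≤ |deriv (deriv f₁) x * f₁ x| := neg_le_abs _
        _ = |deriv (deriv f₁) x| * f₁ x := by
            rw [abs_mul, abs_of_nonneg (hf₁nonneg x hx)]
    have hA : |deriv (deriv f₁) x| ≤ (α * (1 + c) + β) * x ^ (β - α - 1) := by
      rw [hderiv2 x hx, abs_neg]
      have h2 : x ^ (-α - 1) ≤ x ^ (β - α - 1) :=
        Real.rpow_le_rpow_of_exponent_le hx1 (by linarith)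
      have e1 : |(-α) * x ^ (-α - 1) * (Real.sin (x ^ β) + c)|
          ≤ α * (1 + c) * x ^ (β - α - 1) := by
        rw [abs_mul, abs_mul, abs_neg, abs_of_pos (by linarith : (0:ℝ) < α),
          abs_of_pos (Real.rpow_pos_of_pos hx _), abs_of_pos (hsc _)]
        calc α * x ^ (-α - 1) * (Real.sin (x ^ β) + c) ≤ α * x ^ (-α - 1) * (1 + c) := by
              apply mul_le_mul_of_nonneg_left (hsc' _)
              have := Real.rpow_pos_of_pos hx (-α - 1); nlinarith
          _ = α * (1 + c) * x ^ (-α - 1) := by ring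
          _ ≤ α * (1 + c) * x ^ (β - α - 1) := by
              apply mul_le_mul_of_nonneg_left h2; nlinarith
      have e2 : |x ^ (-α) * (Real.cos (x ^ β) * (β * x ^ (β - 1)))|
          ≤ β * x ^ (β - α - 1) := by
        have hxp : (0:ℝ) < x ^ (-α) := Real.rpow_pos_of_pos hx _
        have hxq : (0:ℝ) < x ^ (β - 1) := Real.rpow_pos_of_pos hx _
        have hcos := Real.abs_cos_le_one (x ^ β)
        have hmul : x ^ (-α) * x ^ (β - 1) = x ^ (β - α - 1) := by
          rw [← Real.rpow_add hx]; ring_nf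
        rw [abs_mul, abs_mul, abs_mul, abs_of_pos hxp,
          abs_of_pos (by linarith : (0:ℝ) < β), abs_of_pos hxq]
        calc x ^ (-α) * (|Real.cos (x ^ β)| * (β * x ^ (β - 1)))
            ≤ x ^ (-α) * (1 * (β * x ^ (β - 1))) := by
              apply mul_le_mul_of_nonneg_left ?_ hxp.le
              apply mul_le_mul_of_nonneg_right hcos
              nlinarith
          _ = β * (x ^ (-α) * x ^ (β - 1)) := by ring
          _ = β * x ^ (β - α - 1) := by rw [hmul]
      calc |(-α) * x ^ (-α - 1) * (Real.sin (x ^ β) + c)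
            + x ^ (-α) * (Real.cos (x ^ β) * (β * x ^ (β - 1)))|
          ≤ |(-α) * x ^ (-α - 1) * (Real.sin (x ^ β) + c)|
            + |x ^ (-α) * (Real.cos (x ^ β) * (β * x ^ (β - 1)))| := abs_add_le _ _
        _ ≤ α * (1 + c) * x ^ (β - α - 1) + β * x ^ (β - α - 1) := add_le_add e1 e2
        _ = (α * (1 + c) + β) * x ^ (β - α - 1) := by ring
    have hB : f₁ x ≤ (1 + c) / (α - 1) * x ^ (-α + 1) := by
      calc f₁ x ≤ x ^ (-α + 1) / (α - 1) * (1 + c) := hf₁bd x hx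
        _ = (1 + c) / (α - 1) * x ^ (-α + 1) := by ring
    have hDlow : (c - 1) * x ^ (-α) ≤ g x := by
      have hs := Real.neg_one_le_sin (x ^ β)
      have h1 : c - 1 ≤ Real.sin (x ^ β) + c := by linarith
      calc (c - 1) * x ^ (-α) = x ^ (-α) * (c - 1) := by ring
        _ ≤ x ^ (-α) * (Real.sin (x ^ β) + c) :=
            mul_le_mul_of_nonneg_left h1 (Real.rpow_pos_of_pos hx _).le
        _ = g x := rfl
    have hnum : (0:ℝ) ≤ (α * (1 + c) + β) * x ^ (β - α - 1)
        * ((1 + c) / (α - 1) * x ^ (-α + 1)) :=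
      mul_nonneg (mul_nonneg hab.le (Real.rpow_pos_of_pos hx _).le)
        (mul_nonneg (div_pos hc1 hα1).le (Real.rpow_pos_of_pos hx _).le)
    have hxd : (0:ℝ) < x ^ (-α) := Real.rpow_pos_of_pos hx _
    calc deriv (deriv f₁) x * f₁ x / deriv f₁ x
        ≤ |deriv (deriv f₁) x| * f₁ x / g x := hstep1
      _ ≤ ((α * (1 + c) + β) * x ^ (β - α - 1) * ((1 + c) / (α - 1) * x ^ (-α + 1)))
          / ((c - 1) * x ^ (-α)) := by
          apply div_le_div₀ hnum ?_ (mul_pos hcm hxd) hDlow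
          exact mul_le_mul hA hB (hf₁nonneg x hx)
            (mul_nonneg hab.le (Real.rpow_pos_of_pos hx _).le)
      _ = (α * (1 + c) + β) * ((1 + c) / (α - 1)) / (c - 1)
          * (x ^ (β - α - 1) * x ^ (-α + 1) / x ^ (-α)) := by
          field_simp
      _ = (α * (1 + c) + β) * ((1 + c) / (α - 1)) / (c - 1) * x ^ (β - α) := by
          rw [← Real.rpow_add hx, ← Real.rpow_sub hx]
          ring_nf
      _ ≤ (α * (1 + c) + β) * ((1 + c) / (α - 1)) / (c - 1) * 1 := by
          apply mul_le_mul_of_nonneg_left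
            (Real.rpow_le_one_of_one_le_of_nonpos hx1 (by linarith))
          exact (div_pos (mul_pos hab (div_pos hc1 hα1)) hcm).le
      _ = (α * (1 + c) + β) * ((1 + c) / (α - 1)) / (c - 1) := mul_one _
  -- non-convexity
  have part8 : ¬ (∀ᶠ x in atTop, 0 ≤ deriv (deriv f₁) x) := by
    intro hev
    rw [eventually_atTop] at hev
    obtain ⟨N, hN⟩ := hev
    have hN'1 : (1:ℝ) ≤ max N 1 := le_max_right _ _
    have hN'pos : (0:ℝ) < max N 1 := by linarith
    have hNb : (0:ℝ) < (max N 1) ^ β := Real.rpow_pos_of_pos hN'pos _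
    obtain ⟨k, hk⟩ := exists_nat_gt (max ((max N 1) ^ β) (α * c / β) / (2 * Real.pi))
    have hπ : (0:ℝ) < 2 * Real.pi := by positivity
    have hmaxpos : (0:ℝ) < max ((max N 1) ^ β) (α * c / β) :=
      lt_of_lt_of_le hNb (le_max_left _ _)
    have ht : max ((max N 1) ^ β) (α * c / β) < (k:ℝ) * (2 * Real.pi) := by
      rw [div_lt_iff₀ hπ] at hk; linarith
    have ht0 : (0:ℝ) < (k:ℝ) * (2 * Real.pi) := lt_trans hmaxpos ht
    set x : ℝ := ((k:ℝ) * (2 * Real.pi)) ^ β⁻¹ with hxdef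
    have hx0 : 0 < x := Real.rpow_pos_of_pos ht0 _
    have hxb : x ^ β = (k:ℝ) * (2 * Real.pi) := Real.rpow_inv_rpow ht0.le hβ.ne'
    have hxN : max N 1 ≤ x := by
      have h1 : (max N 1) ^ β ≤ (k:ℝ) * (2 * Real.pi) :=
        le_of_lt (lt_of_le_of_lt (le_max_left _ _) ht)
      have h2 : ((max N 1) ^ β) ^ β⁻¹ ≤ ((k:ℝ) * (2 * Real.pi)) ^ β⁻¹ :=
        Real.rpow_le_rpow hNb.le h1 (by positivity)
      rwa [Real.rpow_rpow_inv hN'pos.le hβ.ne'] at h2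
    have hsin : Real.sin (x ^ β) = 0 := by
      rw [hxb, show (k:ℝ) * (2 * Real.pi) = ((2 * k : ℕ) : ℝ) * Real.pi by push_cast; ring]
      exact Real.sin_nat_mul_pi (2 * k)
    have hcos : Real.cos (x ^ β) = 1 := by
      rw [hxb]; exact Real.cos_nat_mul_two_pi k
    have hlt : deriv (deriv f₁) x < 0 := by
      rw [hderiv2 x hx0, hsin, hcos]
      have hmul : x ^ (-α) * x ^ (β - 1) = x ^ β * x ^ (-α - 1) := by
        rw [← Real.rpow_add hx0, ← Real.rpow_add hx0]; ring_nf
      have hkey : α * c < β * ((k:ℝ) * (2 * Real.pi)) := by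
        have h := lt_of_le_of_lt (le_max_right ((max N 1) ^ β) (α * c / β)) ht
        rw [div_lt_iff₀ hβ] at h
        linarith
      have hxp : (0:ℝ) < x ^ (-α - 1) := Real.rpow_pos_of_pos hx0 _
      have hrw : -((-α) * x ^ (-α - 1) * (0 + c) + x ^ (-α) * (1 * (β * x ^ (β - 1))))
          = α * c * x ^ (-α - 1) - β * ((k:ℝ) * (2 * Real.pi)) * x ^ (-α - 1) := by
        rw [show x ^ (-α) * (1 * (β * x ^ (β - 1))) = β * (x ^ (-α) * x ^ (β - 1)) by ring,
          hmul, hxb]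
        ring
      rw [hrw]
      nlinarith [mul_lt_mul_of_pos_right hkey hxp]
    have := hN x (le_trans (le_max_left N 1) hxN)
    linarith
  exact ⟨fun x hx => hint x hx, hf₁pos, hasderiv,
    fun x hx => neg_lt_zero.mpr (hgpos x hx), htend1, htend2, part7, part8⟩
end

section
/- Let (y_n)_{n≥1} be a positive sequence decreasing to 0 with Σ_{n≥1} y_n = +∞, let θ_1 ∈ (0, π/2), let (δ_n)_{n≥1} be positive with θ_∞ := θ_1 + 2Σ_{n≥1} δ_n < π/2, and define θ_n := θ_1 + 2Σ_{k=1}^{n−1} δ_k and, from any x_1 ≥ 0, the sequence x_{n+1} := x_n + (y_n + y_{n+1})/tan θ_{n+1}. Then for every n ≥ 1, x_{n+1} − x_n ≥ (y_n + y_{n+1})/tan θ_∞, the sequence (x_n) is strictly increasing, all θ_n lie in (θ_1, θ_∞) ⊂ (0, π/2), and x_n → +∞. -/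
open Real Filter Set

/-- The paper's final construction: given non-summable heights `y_n ↘ 0`, an angle
`θ₁ ∈ (0,π/2)`, and positive deflections `δ_n` with `θ∞ := θ₁ + 2Σδ_n < π/2`, the polyline
with angles `θ_n = θ₁ + 2Σ_{k<n} δ_k` and abscissas `x_{n+1} = x_n + (y_n + y_{n+1})/tan θ_{n+1}`
satisfies `x_{n+1} − x_n ≥ (y_n + y_{n+1})/tan θ∞`, is strictly increasing, keeps all angles
in `(θ₁, θ∞) ⊆ (0, π/2)`, and escapes: `x_n → +∞`. -/
theorem escape_construction (y δ θ x : ℕ → ℝ) (θ₁ θinf x₁ : ℝ)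
    (hy_pos : ∀ n, 0 < y n)
    (hy_anti : StrictAnti y)
    (hy_lim : Tendsto y atTop (nhds 0))
    (hy_div : ¬ Summable y)
    (hθ₁ : θ₁ ∈ Set.Ioo 0 (π / 2))
    (hδ_pos : ∀ n, 0 < δ n)
    (hδ_sum : Summable δ)
    (hθinf : θinf = θ₁ + 2 * ∑' n, δ n)
    (hθinf_lt : θinf < π / 2)
    (hθ : ∀ n, θ n = θ₁ + 2 * ∑ k ∈ Finset.range n, δ k)
    (hx₁ : 0 ≤ x₁)
    (hx0 : x 0 = x₁)
    (hxrec : ∀ n, x (n + 1) = x n + (y n + y (n + 1)) / Real.tan (θ (n + 1))) :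
    (∀ n, (y n + y (n + 1)) / Real.tan θinf ≤ x (n + 1) - x n) ∧
    StrictMono x ∧
    (∀ n, θ (n + 1) ∈ Set.Ioo θ₁ θinf) ∧
    (∀ n, θ n ∈ Set.Ioo 0 (π / 2)) ∧
    Tendsto x atTop atTop := by
  have hθ₁pos : 0 < θ₁ := hθ₁.1
  -- partial sums of δ are strictly below the total sum
  have hpartial : ∀ n, ∑ k ∈ Finset.range n, δ k + δ n ≤ ∑' k, δ k := by
    intro n
    have := Summable.sum_le_tsum (Finset.range (n + 1)) (fun i _ => (hδ_pos i).le) hδ_sum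
    rwa [Finset.sum_range_succ] at this
  have hθmem : ∀ n, θ (n + 1) ∈ Set.Ioo θ₁ θinf := by
    intro n
    constructor
    · rw [hθ]
      have hpos : (0:ℝ) < ∑ k ∈ Finset.range (n + 1), δ k :=
        Finset.sum_pos (fun i _ => hδ_pos i) ⟨0, by simp⟩
      linarith
    · rw [hθ, hθinf]
      have h1 := hpartial (n + 1)
      have h2 := hδ_pos (n + 1)
      linarith
  have hθall : ∀ n, θ n ∈ Set.Ioo 0 (π / 2) := by
    intro n
    cases n with
    | zero =>
      rw [hθ 0]; simpa using hθ₁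
    | succ n =>
      have h := hθmem n
      exact ⟨hθ₁pos.trans h.1, h.2.trans hθinf_lt⟩
  have hθinf_pos : 0 < θinf := hθ₁pos.trans ((hθmem 0).1.trans (hθmem 0).2)
  have htaninf : 0 < Real.tan θinf :=
    Real.tan_pos_of_pos_of_lt_pi_div_two hθinf_pos hθinf_lt
  have hdiff : ∀ n, (y n + y (n + 1)) / Real.tan θinf ≤ x (n + 1) - x n := by
    intro n
    have hmem := hθmem n
    have h1 : 0 < θ (n + 1) := (hθall (n + 1)).1
    have htanpos : 0 < Real.tan (θ (n + 1)) :=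
      Real.tan_pos_of_pos_of_lt_pi_div_two h1 (hθall (n + 1)).2
    have htanle : Real.tan (θ (n + 1)) ≤ Real.tan θinf :=
      (Real.tan_lt_tan_of_lt_of_lt_pi_div_two (by linarith [Real.pi_pos]) hθinf_lt hmem.2).le
    have hyn : 0 ≤ y n + y (n + 1) := by
      have := hy_pos n; have := hy_pos (n + 1); linarith
    have key : (y n + y (n + 1)) / Real.tan θinf ≤ (y n + y (n + 1)) / Real.tan (θ (n + 1)) := by
      gcongr
    rw [hxrec n]
    linarith
  have hmono : StrictMono x := by
    apply strictMono_nat_of_lt_succ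
    intro n
    have h := hdiff n
    have hpos : 0 < (y n + y (n + 1)) / Real.tan θinf := by
      have := hy_pos n; have := hy_pos (n + 1); positivity
    linarith
  refine ⟨hdiff, hmono, hθmem, hθall, ?_⟩
  have hlb : ∀ n, x 0 + (∑ k ∈ Finset.range n, y k) / Real.tan θinf ≤ x n := by
    intro n
    induction n with
    | zero => simp
    | succ n ih =>
      have h := hdiff n
      have hstep : y n / Real.tan θinf ≤ (y n + y (n + 1)) / Real.tan θinf := by
        gcongr
        · linarith [hy_pos (n + 1)]
      rw [Finset.sum_range_succ, add_div]
      linarith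
  have hsum : Tendsto (fun n => ∑ k ∈ Finset.range n, y k) atTop atTop :=
    (not_summable_iff_tendsto_nat_atTop_of_nonneg (fun i => (hy_pos i).le)).1 hy_div
  have : Tendsto (fun n => x 0 + (∑ k ∈ Finset.range n, y k) / Real.tan θinf) atTop atTop :=
    tendsto_atTop_add_const_left _ _ (hsum.atTop_div_const htaninf)
  exact tendsto_atTop_mono hlb this
end

section
/- Let f : ℝ → ℝ be differentiable, positive, and decreasing on [x_1,∞) with f'(x) < 0 there, and suppose −f'(x)/f(x) ≥ k_5 > 0 for all x ≥ x_1. Let (x_n)_{n≥1} be an increasing sequence in [x_1,∞) with x_n → +∞ satisfying x_{n+1} − x_n ≤ (2/k_2)·f(x_n) for some constant k_2 > 0. Then Σ_{n≥1} (−f'(x_n)) = +∞. -/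
open Real Filter Set

/- Since `−f' ≥ k₅ f` and `f(x_n) ≥ (k₂/2)(x_{n+1} − x_n)`, each term dominates
`(k₂ k₅/2)(x_{n+1} − x_n)`; these lower bounds telescope to `(k₂ k₅/2)(x_N − x_0) → ∞`. -/

theorem tendsto_sum_range_atTop_of_mul_sub_le {a x : ℕ → ℝ} {c : ℝ} (hc : 0 < c)
    (hx : Tendsto x atTop atTop) (h : ∀ n, c * (x (n + 1) - x n) ≤ a n) :
    Tendsto (fun N => ∑ n ∈ Finset.range N, a n) atTop atTop := by
  have htelescope : ∀ N, c * (x N - x 0) ≤ ∑ n ∈ Finset.range N, a n := fun N =>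
    calc c * (x N - x 0) = ∑ n ∈ Finset.range N, c * (x (n + 1) - x n) := by
          rw [← Finset.mul_sum, Finset.sum_range_sub]
      _ ≤ ∑ n ∈ Finset.range N, a n := Finset.sum_le_sum fun n _ => h n
  exact tendsto_atTop_mono htelescope
    ((hx.atTop_add tendsto_const_nhds).const_mul_atTop hc)

theorem A1_series_diverges_general (f : ℝ → ℝ) (x₁ k₂ k₅ : ℝ) (x : ℕ → ℝ)
    (hpos : ∀ y, x₁ ≤ y → 0 < f y)
    (hk₅ : 0 < k₅)
    (hg : ∀ y, x₁ ≤ y → k₅ ≤ -(deriv f y) / f y)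
    (hx : ∀ n, x n ∈ Set.Ici x₁)
    (hxlim : Tendsto x atTop atTop)
    (hk₂ : 0 < k₂)
    (hstep : ∀ n, x (n + 1) - x n ≤ (2 / k₂) * f (x n)) :
    Tendsto (fun N => ∑ n ∈ Finset.range N, -(deriv f (x n))) atTop atTop := by
  refine tendsto_sum_range_atTop_of_mul_sub_le (c := k₅ * k₂ / 2) (by positivity) hxlim
    fun n => ?_
  have hdecay : k₅ * f (x n) ≤ -deriv f (x n) := (le_div_iff₀ (hpos _ (hx n))).1 (hg _ (hx n))
  calc k₅ * k₂ / 2 * (x (n + 1) - x n) ≤ k₅ * k₂ / 2 * ((2 / k₂) * f (x n)) := by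
        gcongr; exact hstep n
    _ = k₅ * f (x n) := by field_simp
    _ ≤ -deriv f (x n) := hdecay

/-- Conclusion of case (A1): if `−f'/f ≥ k₅ > 0` on `[x₁,∞)` and the increasing abscissas
`x_n → +∞` satisfy the step bound `x_{n+1} − x_n ≤ (2/k₂)·f(x_n)`, then
`Σ (−f'(x_n)) = +∞`. -/
theorem A1_series_diverges (f : ℝ → ℝ) (x₁ k₂ k₅ : ℝ) (x : ℕ → ℝ)
    (hdiff : ∀ y, x₁ ≤ y → DifferentiableAt ℝ f y)
    (hpos : ∀ y, x₁ ≤ y → 0 < f y)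
    (hmono : AntitoneOn f (Set.Ici x₁))
    (hderiv_neg : ∀ y, x₁ ≤ y → deriv f y < 0)
    (hk₅ : 0 < k₅)
    (hg : ∀ y, x₁ ≤ y → k₅ ≤ -(deriv f y) / f y)
    (hx : ∀ n, x n ∈ Set.Ici x₁)
    (hxmono : StrictMono x)
    (hxlim : Tendsto x atTop atTop)
    (hk₂ : 0 < k₂)
    (hstep : ∀ n, x (n + 1) - x n ≤ (2 / k₂) * f (x n)) :
    Tendsto (fun N => ∑ n ∈ Finset.range N, -(deriv f (x n))) atTop atTop :=
  A1_series_diverges_general f x₁ k₂ k₅ x hpos hk₅ hg hx hxlim hk₂ hstep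
end
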